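/- Let Σ = {u = 0} be a regular surface in the Heisenberg group and γ : [a,b] → Σ a Euclidean C²-smooth regular curve through non-characteristic points. If ω(γ̇(t)) ≠ 0, then the limit as L → +∞ of the signed geodesic curvature k^{L,∇¹,s}_{γ,Σ}(t) associated to the second Schouten–Van Kampen affine connection exists and equals p̄(γ(t))γ̇₁(t) / (2|ω(γ̇(t))|). -/
import Mathlib


open Filter Real Topology


set_option maxHeartbeats 2000000 in
theorem aux_limit_SvK (pp qq U l X1 X2 A1 A2 W W' : ℝ)
    (hl : l = Real.sqrt (pp^2 + qq^2)) (hl0 : l ≠ 0) (hW : W ≠ 0)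
    (k : ℝ → ℝ)
    (hk : ∀ L : ℝ, 0 < L → k L =
      (((U / Real.sqrt L / Real.sqrt (pp^2 + qq^2 + (U / Real.sqrt L)^2)) * (pp / l) * A1
        + (U / Real.sqrt L / Real.sqrt (pp^2 + qq^2 + (U / Real.sqrt L)^2)) * (qq / l) * (A2 - L * W * X1 / 2)
        - (l / Real.sqrt (pp^2 + qq^2 + (U / Real.sqrt L)^2)) * Real.sqrt L * (W' + X1 * X2 / 2))
        * (qq / l * X1 - pp / l * X2)
      - (qq / l * A1 - pp / l * (A2 - L * W * X1 / 2))
        * ((U / Real.sqrt L / Real.sqrt (pp^2 + qq^2 + (U / Real.sqrt L)^2)) * (pp / l * X1 + qq / l * X2)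
          - (l / Real.sqrt (pp^2 + qq^2 + (U / Real.sqrt L)^2)) * Real.sqrt L * W))
      / Real.sqrt ((X1^2 + X2^2 + L * W^2)^3)) :
    Tendsto k atTop (𝓝 (pp / l * X1 / (2 * |W|))) := by
  have hlpos : 0 < l := lt_of_le_of_ne (by rw [hl]; exact Real.sqrt_nonneg _) (Ne.symm hl0)
  have hpq : 0 < pp^2 + qq^2 := Real.sqrt_pos.mp (hl ▸ hlpos)
  have hW2 : 0 < W^2 := by positivity
  have hWabs : |W| ≠ 0 := abs_ne_zero.mpr hW
  set F : ℝ → ℝ := fun e =>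
    (e^2 * (qq/l*X1 - pp/l*X2) * (U*e^2*((pp/l)*A1+(qq/l)*A2) - U*W*X1*(qq/l)/2 - l*(W' + X1*X2/2))
      - (e^2*((qq/l)*A1 - (pp/l)*A2) + (pp/l)*W*X1/2) * (U*e^2*((pp/l)*X1+(qq/l)*X2) - l*W))
    / (Real.sqrt (pp^2+qq^2+U^2*e^2) * Real.sqrt ((e^2*(X1^2+X2^2) + W^2)^3)) with hF
  have hmap : Tendsto (fun L : ℝ => 1 / Real.sqrt L) atTop (𝓝 0) := by
    have h1 : Tendsto (fun L : ℝ => Real.sqrt L⁻¹) atTop (𝓝 (Real.sqrt 0)) :=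
      tendsto_inv_atTop_zero.sqrt
    simpa [one_div, Real.sqrt_inv, Real.sqrt_zero] using h1
  have hcF : ContinuousAt F 0 := by
    rw [hF]
    apply ContinuousAt.div
    · fun_prop
    · fun_prop
    · have h1 : 0 < Real.sqrt (pp^2+qq^2+U^2*(0:ℝ)^2) := Real.sqrt_pos.mpr (by nlinarith)
      have h2 : 0 < Real.sqrt (((0:ℝ)^2*(X1^2+X2^2) + W^2)^3) :=
        Real.sqrt_pos.mpr (by norm_num; positivity)
      exact (mul_pos h1 h2).ne'
  have hF0 : F 0 = pp / l * X1 / (2 * |W|) := by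
    rw [hF]
    have e1 : Real.sqrt (pp^2+qq^2+U^2*(0:ℝ)^2) = l := by rw [hl]; norm_num
    have e2 : Real.sqrt (((0:ℝ)^2*(X1^2+X2^2) + W^2)^3) = |W| * W^2 := by
      rw [show ((0:ℝ)^2*(X1^2+X2^2) + W^2)^3 = (|W| * W^2)^2 by
        rw [mul_pow, sq_abs]; ring]
      exact Real.sqrt_sq (by positivity)
    simp only [e1, e2]
    rw [div_eq_div_iff (by positivity) (by positivity)]
    field_simp
    ring
  have hcomp : Tendsto (fun L => F (1 / Real.sqrt L)) atTop (𝓝 (F 0)) := hcF.tendsto.comp hmap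
  rw [← hF0]
  apply hcomp.congr'
  filter_upwards [eventually_gt_atTop 0] with L hL
  rw [hk L hL, hF]
  beta_reduce
  obtain ⟨S, hS, hS2⟩ : ∃ S : ℝ, 0 < S ∧ S^2 = L :=
    ⟨Real.sqrt L, Real.sqrt_pos.mpr hL, Real.sq_sqrt hL.le⟩
  have hSL : Real.sqrt L = S := by rw [← hS2, Real.sqrt_sq hS.le]
  rw [hSL, ← hS2]
  have hT' : Real.sqrt (pp^2+qq^2+(U/S)^2) = Real.sqrt (pp^2+qq^2+U^2*(1/S)^2) := by
    congr 1; ring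
  rw [hT']
  have hTpos : 0 < Real.sqrt (pp^2+qq^2+U^2*(1/S)^2) := Real.sqrt_pos.mpr (by positivity)
  have hDEpos : 0 < Real.sqrt (((1/S)^2*(X1^2+X2^2)+W^2)^3) := by
    apply Real.sqrt_pos.mpr
    have h1 : 0 ≤ (1/S)^2*(X1^2+X2^2) := by positivity
    nlinarith [pow_pos (by nlinarith : (0:ℝ) < (1/S)^2*(X1^2+X2^2)+W^2) 3]
  have hD : Real.sqrt ((X1^2+X2^2+S^2*W^2)^3)
      = S^3 * Real.sqrt (((1/S)^2*(X1^2+X2^2)+W^2)^3) := by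
    rw [show (X1^2+X2^2+S^2*W^2)^3 = (S^3)^2 * (((1/S)^2*(X1^2+X2^2)+W^2)^3) by
      field_simp]
    rw [Real.sqrt_mul (sq_nonneg _), Real.sqrt_sq (by positivity)]
  rw [hD]
  generalize hTg : Real.sqrt (pp^2+qq^2+U^2*(1/S)^2) = T at hTpos ⊢
  generalize hDg : Real.sqrt (((1/S)^2*(X1^2+X2^2)+W^2)^3) = DE at hDEpos ⊢
  rw [div_eq_div_iff (by positivity) (by positivity)]
  field_simp
  ring

theorem signed_geodesic_curvature_limit_second_SvK_nonhorizontal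
    (u : ℝ → ℝ → ℝ → ℝ)
    (γ₁ γ₂ γ₃ ω p q uz lf pbar qbar c1 : ℝ → ℝ)
    (rr lL rbar c2 aa bb k : ℝ → ℝ → ℝ)
    (a b t : ℝ) (ht : t ∈ Set.Icc a b)
    (hu : ContDiff ℝ 2 (fun v : ℝ × ℝ × ℝ => u v.1 v.2.1 v.2.2))
    (hγ : ContDiffOn ℝ 2 (fun s => (γ₁ s, γ₂ s, γ₃ s)) (Set.Icc a b))
    (hreg : ∀ s ∈ Set.Icc a b, ¬ (deriv γ₁ s = 0 ∧ deriv γ₂ s = 0 ∧ deriv γ₃ s = 0))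
    (hSurf : ∀ s ∈ Set.Icc a b, u (γ₁ s) (γ₂ s) (γ₃ s) = 0)
    (hω : ∀ s, ω s = deriv γ₃ s + (1/2) * (γ₂ s * deriv γ₁ s - γ₁ s * deriv γ₂ s))
    (hp : ∀ s, p s = deriv (fun x => u x (γ₂ s) (γ₃ s)) (γ₁ s)
        - (γ₂ s / 2) * deriv (fun z => u (γ₁ s) (γ₂ s) z) (γ₃ s))
    (hq : ∀ s, q s = deriv (fun y => u (γ₁ s) y (γ₃ s)) (γ₂ s)
        + (γ₁ s / 2) * deriv (fun z => u (γ₁ s) (γ₂ s) z) (γ₃ s))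
    (huz : ∀ s, uz s = deriv (fun z => u (γ₁ s) (γ₂ s) z) (γ₃ s))
    (hl : ∀ s, lf s = Real.sqrt (p s ^ 2 + q s ^ 2))
    (hnc : ∀ s ∈ Set.Icc a b, lf s ≠ 0)
    (hpbar : ∀ s, pbar s = p s / lf s)
    (hqbar : ∀ s, qbar s = q s / lf s)
    (hrr : ∀ L s, rr L s = uz s / Real.sqrt L)
    (hlL : ∀ L s, lL L s = Real.sqrt (p s ^ 2 + q s ^ 2 + rr L s ^ 2))
    (hrbar : ∀ L s, rbar L s = rr L s / lL L s)
    (hc1 : ∀ s, c1 s = qbar s * deriv γ₁ s - pbar s * deriv γ₂ s)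
    (hc2 : ∀ L s, c2 L s = rbar L s * (pbar s * deriv γ₁ s + qbar s * deriv γ₂ s)
        - (lf s / lL L s) * Real.sqrt L * ω s)
    (haa : ∀ L s, aa L s = qbar s * deriv (deriv γ₁) s - pbar s * (deriv (deriv γ₂) s - L * ω s * deriv γ₁ s / 2))
    (hbb : ∀ L s, bb L s = rbar L s * pbar s * deriv (deriv γ₁) s + rbar L s * qbar s * (deriv (deriv γ₂) s - L * ω s * deriv γ₁ s / 2) - (lf s / lL L s) * Real.sqrt L * (deriv ω s + deriv γ₁ s * deriv γ₂ s / 2))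
    (hk : ∀ L s, k L s = (bb L s * c1 s - aa L s * c2 L s) / Real.sqrt (((deriv γ₁ s)^2 + (deriv γ₂ s)^2 + L * (ω s)^2)^3))
    (h0 : ω t ≠ 0) :
    Filter.Tendsto (fun L => k L t) Filter.atTop
      (nhds (pbar t * deriv γ₁ t / (2 * |ω t|))) := by
  rw [hpbar t]
  apply aux_limit_SvK (p t) (q t) (uz t) (lf t) (deriv γ₁ t) (deriv γ₂ t)
    (deriv (deriv γ₁) t) (deriv (deriv γ₂) t) (ω t) (deriv ω t)
    (hl t) (hnc t ht) h0
  intro L hL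
  rw [hk L t, hbb L t, haa L t, hc2 L t, hc1 t, hrbar L t, hlL L t, hrr L t, hpbar t, hqbar t]
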